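/- arXiv:2205.05631 — 3 statements merged into one kernel-verified Lean document; each statement's English description precedes it below -/
import Mathlib

section
/- Let P, Q be positive probability distributions on {1,...,k} with P ≠ Q, let α_i = ln(P_i/Q_i), V(P‖Q) = Σ_i P_i (α_i − D(P‖Q))², and let 0 < √r̃ < √V(P‖Q)/τ where τ = max{α_j − D(P‖Q) : α_j − D(P‖Q) > 0}. Then the vector Γ* with Γ*_i = P_i + √r̃ (D(P‖Q) − α_i) P_i / √V(P‖Q) is a probability distribution with strictly positive entries satisfying d_{χ²}(Γ*, P) = r̃. -/
theorem gammaStar_is_prob_on_chiSq_sphere (k : ℕ) (hk : 2 ≤ k)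
    (P Q : Fin k → ℝ)
    (hPpos : ∀ i, 0 < P i) (hPsum : ∑ i, P i = 1)
    (hQpos : ∀ i, 0 < Q i) (hQsum : ∑ i, Q i = 1)
    (hPQ : P ≠ Q)
    (D V τ r : ℝ)
    (hD : D = ∑ i, P i * Real.log (P i / Q i))
    (hV : V = ∑ i, P i * (Real.log (P i / Q i) - D) ^ 2)
    (hτmem : ∃ j, Real.log (P j / Q j) - D = τ ∧ 0 < Real.log (P j / Q j) - D)
    (hτmax : ∀ j, 0 < Real.log (P j / Q j) - D → Real.log (P j / Q j) - D ≤ τ)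
    (hr : 0 < Real.sqrt r) (hrτ : Real.sqrt r < Real.sqrt V / τ)
    (Γ : Fin k → ℝ)
    (hΓ : ∀ i, Γ i = P i + Real.sqrt r * (D - Real.log (P i / Q i)) * P i / Real.sqrt V) :
    (∀ i, 0 < Γ i) ∧ (∑ i, Γ i = 1) ∧ ∑ i, (Γ i - P i) ^ 2 / P i = r := by
  set α : Fin k → ℝ := fun i => Real.log (P i / Q i) with hα
  obtain ⟨j, hjτ, hjpos⟩ := hτmem
  have hτ0 : 0 < τ := hjτ ▸ hjpos
  -- V > 0
  have hV0 : 0 < V := by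
    rw [hV]
    have hle : P j * (α j - D) ^ 2 ≤ ∑ i, P i * (α i - D) ^ 2 := by
      apply Finset.single_le_sum (f := fun i => P i * (α i - D) ^ 2)
      · intro i _
        have := hPpos i
        positivity
      · exact Finset.mem_univ j
    have : 0 < P j * (α j - D) ^ 2 := by
      have := hPpos j
      positivity
    linarith
  have hsV : 0 < Real.sqrt V := Real.sqrt_pos.2 hV0
  have hr0 : 0 < r := by
    by_contra h
    push_neg at h
    rw [Real.sqrt_eq_zero_of_nonpos h] at hr
    exact lt_irrefl 0 hr
  have hrsq : Real.sqrt r ^ 2 = r := Real.sq_sqrt hr0.le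
  have hVsq : Real.sqrt V ^ 2 = V := Real.sq_sqrt hV0.le
  have hrτ' : Real.sqrt r * τ < Real.sqrt V := (lt_div_iff₀ hτ0).1 hrτ
  -- sum of P i * (D - α i) = 0
  have hsum0 : ∑ i, P i * (D - α i) = 0 := by
    have : ∑ i, P i * (D - α i) = D * (∑ i, P i) - ∑ i, P i * α i := by
      rw [Finset.mul_sum, ← Finset.sum_sub_distrib]
      congr 1; ext i; ring
    rw [this, hPsum, ← hD]; ring
  have hpos : ∀ i, 0 < Γ i := by
    intro i
    have hΓi : Γ i = P i * (1 + Real.sqrt r * (D - α i) / Real.sqrt V) := by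
      rw [hΓ i]; field_simp; ring
    rw [hΓi]
    apply mul_pos (hPpos i)
    rcases le_or_gt (α i) D with h | h
    · have : 0 ≤ Real.sqrt r * (D - α i) / Real.sqrt V := by
        apply div_nonneg _ hsV.le
        apply mul_nonneg hr.le
        linarith
      linarith
    · have h1 : α i - D ≤ τ := hτmax i (by linarith)
      have h2 : Real.sqrt r * (α i - D) < Real.sqrt V := by
        calc Real.sqrt r * (α i - D) ≤ Real.sqrt r * τ := by
              apply mul_le_mul_of_nonneg_left h1 hr.le
          _ < Real.sqrt V := hrτ'
      have h3 : 0 < (Real.sqrt V + Real.sqrt r * (D - α i)) / Real.sqrt V := by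
        apply div_pos _ hsV
        nlinarith
      have h4 : 1 + Real.sqrt r * (D - α i) / Real.sqrt V
          = (Real.sqrt V + Real.sqrt r * (D - α i)) / Real.sqrt V := by
        field_simp
      rw [h4]; exact h3
  refine ⟨hpos, ?_, ?_⟩
  · have : ∑ i, Γ i = ∑ i, P i + (Real.sqrt r / Real.sqrt V) * ∑ i, P i * (D - α i) := by
      rw [Finset.mul_sum, ← Finset.sum_add_distrib]
      congr 1; ext i
      rw [hΓ i]; ring
    rw [this, hPsum, hsum0, mul_zero, add_zero]
  · have hterm : ∀ i, (Γ i - P i) ^ 2 / P i = (r / V) * (P i * (α i - D) ^ 2) := by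
      intro i
      have hPi : P i ≠ 0 := (hPpos i).ne'
      rw [hΓ i]
      have : P i + Real.sqrt r * (D - α i) * P i / Real.sqrt V - P i
          = Real.sqrt r * (D - α i) * P i / Real.sqrt V := by ring
      rw [this, div_pow, mul_pow, mul_pow, hrsq, hVsq]
      field_simp
      ring
    calc ∑ i, (Γ i - P i) ^ 2 / P i = ∑ i, (r / V) * (P i * (α i - D) ^ 2) := by
          exact Finset.sum_congr rfl fun i _ => hterm i
      _ = (r / V) * ∑ i, P i * (α i - D) ^ 2 := by rw [Finset.mul_sum]
      _ = r := by
          have : ∑ i, P i * (α i - D) ^ 2 = V := by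
            rw [hV]
          rw [this, div_mul_cancel₀ _ hV0.ne']
end

section
/- Minimization of a linear functional over a chi-squared ball: Let P, Q be positive probability distributions on {1,...,k} with P ≠ Q, α_i = ln(P_i/Q_i), V = V(P‖Q) = Σ_i P_i (α_i − D(P‖Q))², and 0 < √r̃ < √V/τ with τ as defined. Then the minimum of ℓ(Γ) = Σ_{i=1}^k (Γ_i − P_i) α_i over all probability distributions Γ with positive entries satisfying d_{χ²}(Γ,P) ≤ r̃ equals −√(V r̃), attained at Γ*_i = P_i + √r̃ (D(P‖Q) − α_i) P_i / √V. -/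
/-!
Write `c i = α i - D`, so that `∑ P i c i = 0` and `∑ P i c i² = V`. Since `Γ` and `P` have the
same total mass, `ℓ(Γ) = ∑ (Γ i - P i) c i`, and Cauchy–Schwarz with weights `P i` gives
`ℓ(Γ)² ≤ d_{χ²}(Γ, P) · V ≤ r̃ V`. Equality holds for `Γ - P` proportional to `-P c`, which is
`Γ*`; the bound `√r̃ < √V / τ` is what keeps `Γ*` positive.
-/

open Finset

namespace ChiSqBall

variable {ι : Type*} [Fintype ι]

theorem sum_mul_sub_sum_mul_eq_zero {P : ι → ℝ} (hP : ∑ i, P i = 1) (a : ι → ℝ) :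
    ∑ i, P i * (a i - ∑ j, P j * a j) = 0 := by
  simp only [mul_sub, sum_sub_distrib, ← sum_mul, hP, one_mul, sub_self]

theorem sum_mul_sub_const {x : ι → ℝ} (hx : ∑ i, x i = 0) (a : ι → ℝ) (D : ℝ) :
    ∑ i, x i * (a i - D) = ∑ i, x i * a i := by
  simp only [mul_sub, sum_sub_distrib, ← sum_mul, hx, zero_mul, sub_zero]

theorem sq_sum_mul_le_chiSq_mul {P : ι → ℝ} (hP : ∀ i, 0 < P i) (x c : ι → ℝ) :
    (∑ i, x i * c i) ^ 2 ≤ (∑ i, x i ^ 2 / P i) * ∑ i, P i * c i ^ 2 :=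
  sum_sq_le_sum_mul_sum_of_sq_le_mul _
    (fun i _ => div_nonneg (sq_nonneg _) (hP i).le)
    (fun i _ => mul_nonneg (hP i).le (sq_nonneg _))
    (fun i _ => le_of_eq <| by field_simp [(hP i).ne'])

theorem neg_sqrt_le_sum_mul {P x : ι → ℝ} (hP : ∀ i, 0 < P i) (hx : ∑ i, x i = 0)
    (a : ι → ℝ) (D : ℝ) {r : ℝ} (hr : ∑ i, x i ^ 2 / P i ≤ r) :
    -√((∑ i, P i * (a i - D) ^ 2) * r) ≤ ∑ i, x i * a i := by
  have hV : 0 ≤ ∑ i, P i * (a i - D) ^ 2 :=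
    sum_nonneg fun i _ => mul_nonneg (hP i).le (sq_nonneg _)
  have hCS : (∑ i, x i * a i) ^ 2 ≤ (∑ i, P i * (a i - D) ^ 2) * r := by
    calc (∑ i, x i * a i) ^ 2 = (∑ i, x i * (a i - D)) ^ 2 := by rw [sum_mul_sub_const hx]
      _ ≤ (∑ i, x i ^ 2 / P i) * ∑ i, P i * (a i - D) ^ 2 := sq_sum_mul_le_chiSq_mul hP _ _
      _ ≤ (∑ i, P i * (a i - D) ^ 2) * r := by rw [mul_comm]; gcongr
  exact neg_le_of_abs_le (Real.abs_le_sqrt hCS)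

section Tilt

variable {P a : ι → ℝ} {D : ℝ}

theorem sum_tilt_eq_zero (hc : ∑ i, P i * (a i - D) = 0) (t : ℝ) :
    ∑ i, t * (D - a i) * P i = 0 := by
  rw [← mul_zero (-t), ← hc, mul_sum]
  exact sum_congr rfl fun i _ => by ring

theorem chiSq_tilt (hP : ∀ i, 0 < P i) (t : ℝ) :
    ∑ i, (t * (D - a i) * P i) ^ 2 / P i = t ^ 2 * ∑ i, P i * (a i - D) ^ 2 := by
  rw [mul_sum]
  refine sum_congr rfl fun i _ => ?_
  field_simp [(hP i).ne']
  ring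

theorem sum_tilt_mul (hc : ∑ i, P i * (a i - D) = 0) (t : ℝ) :
    ∑ i, t * (D - a i) * P i * a i = -t * ∑ i, P i * (a i - D) ^ 2 := by
  have hshift : ∑ i, t * (D - a i) * P i * (a i - D) = ∑ i, t * (D - a i) * P i * a i :=
    sum_mul_sub_const (sum_tilt_eq_zero hc t) a D
  rw [← hshift, mul_sum]
  exact sum_congr rfl fun i _ => by ring

end Tilt

theorem tilt_pos {p t c D τ : ℝ} (hp : 0 < p) (ht : 0 ≤ t) (htτ : t * τ < 1)
    (hτ : 0 < c - D → c - D ≤ τ) : 0 < p + t * (D - c) * p := by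
  have hlt : t * (c - D) < 1 := by
    rcases le_or_gt (c - D) 0 with hneg | hpos
    · nlinarith
    · nlinarith [hτ hpos]
  have : p + t * (D - c) * p = p * (1 - t * (c - D)) := by ring
  rw [this]
  exact mul_pos hp (by linarith)

theorem pos_of_sqrt_lt_sqrt_div {r V τ : ℝ} (hr : 0 < √r) (h : √r < √V / τ) : 0 < V ∧ 0 < τ := by
  have hquot : 0 < √V / τ := hr.trans h
  constructor
  · by_contra hV
    rw [Real.sqrt_eq_zero'.mpr (not_lt.mp hV), zero_div] at hquot
    exact hquot.false
  · by_contra hτ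
    exact (div_nonpos_of_nonneg_of_nonpos (Real.sqrt_nonneg V) (not_lt.mp hτ)).not_gt hquot

theorem sqrt_div_sqrt_mul_lt_one {r V τ : ℝ} (hr : 0 < √r) (h : √r < √V / τ) :
    √r / √V * τ < 1 := by
  obtain ⟨hV, hτ⟩ := pos_of_sqrt_lt_sqrt_div hr h
  rw [div_mul_eq_mul_div, div_lt_one (Real.sqrt_pos.mpr hV)]
  exact (lt_div_iff₀ hτ).mp h

end ChiSqBall

open ChiSqBall in
theorem min_linear_over_chiSq_ball_general (k : ℕ)
    (P Q : Fin k → ℝ)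
    (hPpos : ∀ i, 0 < P i) (hPsum : ∑ i, P i = 1)
    (D V τ r : ℝ)
    (hD : D = ∑ i, P i * Real.log (P i / Q i))
    (hV : V = ∑ i, P i * (Real.log (P i / Q i) - D) ^ 2)
    (hτmax : ∀ j, 0 < Real.log (P j / Q j) - D → Real.log (P j / Q j) - D ≤ τ)
    (hr : 0 < Real.sqrt r) (hrτ : Real.sqrt r < Real.sqrt V / τ)
    (Γstar : Fin k → ℝ)
    (hΓstar : ∀ i, Γstar i = P i + Real.sqrt r * (D - Real.log (P i / Q i)) * P i / Real.sqrt V) :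
    ((∀ i, 0 < Γstar i) ∧ (∑ i, Γstar i = 1) ∧ ∑ i, (Γstar i - P i) ^ 2 / P i ≤ r) ∧
    (∑ i, (Γstar i - P i) * Real.log (P i / Q i) = -Real.sqrt (V * r)) ∧
    (∀ Γ : Fin k → ℝ, (∀ i, 0 < Γ i) → (∑ i, Γ i = 1) →
      (∑ i, (Γ i - P i) ^ 2 / P i ≤ r) →
      -Real.sqrt (V * r) ≤ ∑ i, (Γ i - P i) * Real.log (P i / Q i)) := by
  have hc : ∑ i, P i * (Real.log (P i / Q i) - D) = 0 :=
    hD ▸ sum_mul_sub_sum_mul_eq_zero hPsum _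
  have hVpos : 0 < V := (pos_of_sqrt_lt_sqrt_div hr hrτ).1
  have hsV : 0 < √V := Real.sqrt_pos.mpr hVpos
  set t := √r / √V
  have hΓsub : ∀ i, Γstar i - P i = t * (D - Real.log (P i / Q i)) * P i := fun i => by
    rw [hΓstar]; ring
  have hsqrt : √(V * r) = t * V := by
    rw [Real.sqrt_mul hVpos.le, div_mul_eq_mul_div, eq_div_iff hsV.ne', mul_right_comm,
      Real.mul_self_sqrt hVpos.le, mul_comm]
  refine ⟨⟨fun i => ?_, ?_, ?_⟩, ?_, fun Γ _ hΓsum hΓr => ?_⟩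
  · linarith [hΓsub i,
      tilt_pos (hPpos i) (div_pos hr hsV).le (sqrt_div_sqrt_mul_lt_one hr hrτ) (hτmax i)]
  · rw [← sub_eq_zero, ← hPsum, ← sum_sub_distrib]
    simp only [hΓsub, sum_tilt_eq_zero hc]
  · simp only [hΓsub]
    rw [chiSq_tilt hPpos, ← hV, div_pow, Real.sq_sqrt (Real.sqrt_pos.mp hr).le,
      Real.sq_sqrt hVpos.le, div_mul_cancel₀ _ hVpos.ne']
  · simp only [hΓsub]
    rw [sum_tilt_mul hc, ← hV, hsqrt, neg_mul]
  · have hx : ∑ i, (Γ i - P i) = 0 := by rw [sum_sub_distrib, hΓsum, hPsum, sub_self]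
    simpa only [← hV] using neg_sqrt_le_sum_mul hPpos hx (fun i => Real.log (P i / Q i)) D hΓr

theorem min_linear_over_chiSq_ball (k : ℕ) (hk : 2 ≤ k)
    (P Q : Fin k → ℝ)
    (hPpos : ∀ i, 0 < P i) (hPsum : ∑ i, P i = 1)
    (hQpos : ∀ i, 0 < Q i) (hQsum : ∑ i, Q i = 1)
    (hPQ : P ≠ Q)
    (D V τ r : ℝ)
    (hD : D = ∑ i, P i * Real.log (P i / Q i))
    (hV : V = ∑ i, P i * (Real.log (P i / Q i) - D) ^ 2)
    (hτmem : ∃ j, Real.log (P j / Q j) - D = τ ∧ 0 < Real.log (P j / Q j) - D)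
    (hτmax : ∀ j, 0 < Real.log (P j / Q j) - D → Real.log (P j / Q j) - D ≤ τ)
    (hr : 0 < Real.sqrt r) (hrτ : Real.sqrt r < Real.sqrt V / τ)
    (Γstar : Fin k → ℝ)
    (hΓstar : ∀ i, Γstar i = P i + Real.sqrt r * (D - Real.log (P i / Q i)) * P i / Real.sqrt V) :
    ((∀ i, 0 < Γstar i) ∧ (∑ i, Γstar i = 1) ∧ ∑ i, (Γstar i - P i) ^ 2 / P i ≤ r) ∧
    (∑ i, (Γstar i - P i) * Real.log (P i / Q i) = -Real.sqrt (V * r)) ∧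
    (∀ Γ : Fin k → ℝ, (∀ i, 0 < Γ i) → (∑ i, Γ i = 1) →
      (∑ i, (Γ i - P i) ^ 2 / P i ≤ r) →
      -Real.sqrt (V * r) ≤ ∑ i, (Γ i - P i) * Real.log (P i / Q i)) :=
  min_linear_over_chiSq_ball_general k P Q hPpos hPsum D V τ r hD hV hτmax hr hrτ Γstar hΓstar
end

section
/- Rounding lemma for types near a target distribution: Let P, Q be positive probability distributions on {1,...,k} with P ≠ Q, and let Γ*(n) be the distribution Γ*_i = P_i + √(r̄_n)(D(P‖Q) − α_i)P_i/√V(P‖Q) with r̄_n = Θ(1/n) and α_i = ln(P_i/Q_i). Then there exist a constant κ > 0 and N ∈ ℕ such that for every n ≥ N there is a type T*_n ∈ 𝒫_n (i.e., n T*_n(a_i) ∈ ℤ_{≥0} for all i and Σ_i n T*_n(a_i) = n) with d_{χ²}(T*_n, P) ≤ r̄_n = d_{χ²}(Γ*(n), P) and |n ℓ(Γ*(n)) − n ℓ(T*_n)| ≤ κ, where ℓ(Γ) = Σ_i (Γ_i − P_i) α_i. -/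
/-!
Write `Γ*(n) = P + G` with `G_i = √r̄ₙ · a_i P_i`, `a_i = (D - α_i) / √V`. Then `∑ G = 0`,
`d_χ²(Γ*, P) = r̄ₙ ∑ P a² ≤ r̄ₙ`, and `|G_i| = O(1/√n) P_i`. Shrink towards `P` to
`P + (1 - ε) G` with `ε ≍ 1/√n`: this is still a probability vector for large `n`, and its
χ²-norm `(1 - ε)√r̄ₙ` leaves room `ε √r̄ₙ ≍ 1/n`. Rounding it to a type (floors, with the deficit
put on one coordinate) moves each coordinate by at most `k/n`, which fits into that room by
Minkowski's inequality. Finally `n |Γ*_i - T_i| ≤ n ε |G_i| + k = O(1)`, which bounds the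
difference of the linear functionals.
-/

open Finset

section
variable {ι : Type*} [Fintype ι]

theorem sqrt_sum_sq_div_add_le (P a b : ι → ℝ) (hP : ∀ i, 0 < P i) :
    √(∑ i, (a i + b i) ^ 2 / P i) ≤ √(∑ i, a i ^ 2 / P i) + √(∑ i, b i ^ 2 / P i) := by
  have key (f : ι → ℝ) :
      √(∑ i, f i ^ 2 / P i) = ‖(WithLp.toLp 2 fun i => f i / √(P i) : EuclideanSpace ℝ ι)‖ := by
    rw [EuclideanSpace.norm_eq]
    congr 1
    refine sum_congr rfl fun i _ => ?_
    rw [Real.norm_eq_abs, sq_abs, div_pow, Real.sq_sqrt (hP i).le]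
  rw [key, key, key]
  refine le_of_eq_of_le (congrArg norm ?_) (norm_add_le _ _)
  rw [← WithLp.toLp_add]
  congr 1
  ext i
  simp [add_div]

theorem exists_nat_sum_eq_and_abs_sub_le (x : ι → ℝ) (hx : ∀ i, 0 ≤ x i) (hsum : ∑ i, x i = 1)
    (n : ℕ) : ∃ m : ι → ℕ, ∑ i, m i = n ∧ ∀ i, |(m i : ℝ) - n * x i| ≤ Fintype.card ι := by
  classical
  obtain ⟨i₀⟩ : Nonempty ι := by
    by_contra h
    rw [not_nonempty_iff] at h
    simp at hsum
  set f : ι → ℕ := fun i => ⌊n * x i⌋₊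
  have hf_le (i : ι) : (f i : ℝ) ≤ n * x i := Nat.floor_le (mul_nonneg n.cast_nonneg (hx i))
  have hf_gt (i : ι) : n * x i - 1 < f i := by
    linarith [Nat.lt_floor_add_one (n * x i)]
  have hdeficit : (n : ℝ) - ∑ i, (f i : ℝ) = ∑ i, (n * x i - f i) := by
    rw [sum_sub_distrib, ← mul_sum, hsum, mul_one]
  have hdeficit_nonneg : 0 ≤ (n : ℝ) - ∑ i, (f i : ℝ) :=
    hdeficit ▸ sum_nonneg fun i _ => sub_nonneg.2 (hf_le i)
  have hdeficit_lt : (n : ℝ) - ∑ i, (f i : ℝ) < Fintype.card ι := by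
    rw [hdeficit, ← card_univ, card_eq_sum_ones, Nat.cast_sum, Nat.cast_one]
    exact sum_lt_sum_of_nonempty ⟨i₀, mem_univ _⟩ fun i _ => by linarith [hf_gt i]
  have hsum_le : ∑ i, f i ≤ n := by exact_mod_cast sub_nonneg.1 hdeficit_nonneg
  have hcard : (1 : ℝ) ≤ Fintype.card ι := by exact_mod_cast Fintype.card_pos_iff.2 ⟨i₀⟩
  refine ⟨f + Pi.single i₀ (n - ∑ i, f i), ?_, fun i => ?_⟩
  · simp only [Pi.add_apply, sum_add_distrib, sum_pi_single', mem_univ, if_true]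
    omega
  · rw [abs_le]
    rcases eq_or_ne i i₀ with rfl | hi
    · simp only [Pi.add_apply, Pi.single_eq_same]
      push_cast [hsum_le]
      constructor <;> linarith [hf_le i, hf_gt i]
    · simp only [Pi.add_apply, Pi.single_eq_of_ne hi, add_zero]
      constructor <;> linarith [hf_le i, hf_gt i]

/-- The set `𝒫_n` of types: empirical distributions of `n` samples. -/
def IsType (n : ℕ) (T : ι → ℝ) : Prop :=
  (∀ i, ∃ m : ℕ, T i = m / n) ∧ ∑ i, T i = 1

theorem exists_isType_chiSq_le_of_slack (P G : ι → ℝ) (hP : ∀ i, 0 < P i)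
    (hPsum : ∑ i, P i = 1) (hGsum : ∑ i, G i = 0) (hGP : ∀ i, |G i| ≤ P i) {r ε : ℝ}
    (hGr : ∑ i, G i ^ 2 / P i ≤ r) (hε₀ : 0 ≤ ε) (hε₁ : ε ≤ 1) {n : ℕ} (hn : 0 < n)
    (hslack : Fintype.card ι / n * √(∑ i, (P i)⁻¹) ≤ ε * √r) :
    ∃ T, IsType n T ∧ ∑ i, (T i - P i) ^ 2 / P i ≤ r ∧
      ∀ i, |P i + G i - T i| ≤ ε * |G i| + Fintype.card ι / n := by
  set δ : ℝ := Fintype.card ι / n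
  set x : ι → ℝ := fun i => P i + (1 - ε) * G i
  have hx_nonneg (i : ι) : 0 ≤ x i := by
    nlinarith [neg_abs_le (G i), hGP i, abs_nonneg (G i)]
  have hx_sum : ∑ i, x i = 1 := by
    simp only [x, sum_add_distrib, ← mul_sum, hPsum, hGsum, mul_zero, add_zero]
  obtain ⟨m, hm_sum, hm⟩ := exists_nat_sum_eq_and_abs_sub_le x hx_nonneg hx_sum n
  have hn' : (0 : ℝ) < n := Nat.cast_pos.2 hn
  set T : ι → ℝ := fun i => m i / n
  have hTx (i : ι) : |T i - x i| ≤ δ := by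
    have hTx_eq : T i - x i = (m i - n * x i) / n := by rw [sub_div, mul_div_cancel_left₀ _ hn'.ne']
    rw [hTx_eq, abs_div, Nat.abs_cast]
    exact div_le_div_of_nonneg_right (hm i) hn'.le
  have hr : 0 ≤ r := le_trans (sum_nonneg fun i _ => div_nonneg (sq_nonneg _) (hP i).le) hGr
  refine ⟨T, ⟨fun i => ⟨m i, rfl⟩, ?_⟩, ?_, fun i => ?_⟩
  · rw [← sum_div, ← Nat.cast_sum, hm_sum, div_self hn'.ne']
  · have hshrunk : √(∑ i, ((1 - ε) * G i) ^ 2 / P i) ≤ (1 - ε) * √r := by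
      simp only [mul_pow, mul_div_assoc, ← mul_sum]
      rw [Real.sqrt_mul (sq_nonneg _), Real.sqrt_sq (by linarith)]
      exact mul_le_mul_of_nonneg_left (Real.sqrt_le_sqrt hGr) (by linarith)
    have hround : √(∑ i, (T i - x i) ^ 2 / P i) ≤ δ * √(∑ i, (P i)⁻¹) := by
      calc √(∑ i, (T i - x i) ^ 2 / P i) ≤ √(δ ^ 2 * ∑ i, (P i)⁻¹) := by
            rw [mul_sum]
            refine Real.sqrt_le_sqrt (sum_le_sum fun i _ => ?_)
            rw [← div_eq_mul_inv]
            exact div_le_div_of_nonneg_right (sq_le_sq' (abs_le.1 (hTx i)).1 (abs_le.1 (hTx i)).2)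
              (hP i).le
        _ = δ * √(∑ i, (P i)⁻¹) := by
            rw [Real.sqrt_mul (sq_nonneg _), Real.sqrt_sq (by positivity)]
    rw [← Real.sqrt_le_sqrt_iff hr]
    calc √(∑ i, (T i - P i) ^ 2 / P i)
        = √(∑ i, ((1 - ε) * G i + (T i - x i)) ^ 2 / P i) := by simp only [x]; ring_nf
      _ ≤ (1 - ε) * √r + δ * √(∑ i, (P i)⁻¹) :=
          (sqrt_sum_sq_div_add_le P _ _ hP).trans (add_le_add hshrunk hround)
      _ ≤ √r := by linarith
  · calc |P i + G i - T i| = |ε * G i - (T i - x i)| := by congr 1; simp only [x]; ring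
      _ ≤ |ε * G i| + |T i - x i| := abs_sub _ _
      _ ≤ ε * |G i| + δ := by rw [abs_mul, abs_of_nonneg hε₀]; exact add_le_add le_rfl (hTx i)

theorem exists_isType_near_add_sqrt_mul (P a : ι → ℝ) (hP : ∀ i, 0 < P i)
    (hPsum : ∑ i, P i = 1) (ha : ∑ i, P i * a i = 0) (ha2 : ∑ i, P i * a i ^ 2 ≤ 1)
    {c₁ : ℝ} (hc₁ : 0 < c₁) (c₂ : ℝ) :
    ∃ κ ≥ 0, ∃ N : ℕ, ∀ n ≥ N, ∀ r, c₁ / n ≤ r → r ≤ c₂ / n → ∃ T, IsType n T ∧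
      ∑ i, (T i - P i) ^ 2 / P i ≤ r ∧ ∀ i, n * |P i + √r * a i * P i - T i| ≤ κ := by
  set k : ℝ := (Fintype.card ι : ℝ)
  -- With `ε = C / √n` the room `ε √(c₁ / n)` is exactly the rounding error `k / n * √(∑ 1 / P)`.
  set C : ℝ := k * √(∑ i, (P i)⁻¹) / √c₁
  set A : ℝ := ∑ i, |a i|
  have hC₀ : 0 ≤ C := div_nonneg (by positivity) (Real.sqrt_nonneg _)
  have hA (i : ι) : |a i| ≤ A := single_le_sum (fun j _ => abs_nonneg (a j)) (mem_univ i)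
  have hA₀ : 0 ≤ A := sum_nonneg fun i _ => abs_nonneg (a i)
  refine ⟨C * √c₂ * A + k, by positivity, max 1 (max ⌈C ^ 2⌉₊ ⌈c₂ * A ^ 2⌉₊),
    fun n hn r hr₁ hr₂ => ?_⟩
  simp only [ge_iff_le, max_le_iff, Nat.ceil_le] at hn
  obtain ⟨hn₁, hCn, hAn⟩ := hn
  have hn₀ : (0 : ℝ) < n := by exact_mod_cast hn₁
  have hr : 0 < r := (div_pos hc₁ hn₀).trans_le hr₁
  have hnr : n * r ≤ c₂ := by rwa [le_div_iff₀ hn₀, mul_comm] at hr₂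
  set ε : ℝ := C / √n
  have hε₁ : ε ≤ 1 := div_le_one_of_le₀ ((le_abs_self C).trans (Real.abs_le_sqrt hCn))
    (Real.sqrt_nonneg _)
  have hrA : √r * A ≤ 1 := by
    rw [← Real.sqrt_sq hA₀, ← Real.sqrt_mul hr.le, Real.sqrt_le_one]
    calc r * A ^ 2 ≤ c₂ / n * A ^ 2 := by gcongr
      _ ≤ 1 := by rw [div_mul_eq_mul_div, div_le_one hn₀]; exact hAn
  have hslack : k / n * √(∑ i, (P i)⁻¹) ≤ ε * √r := by
    calc k / n * √(∑ i, (P i)⁻¹) = C / √n * (√c₁ / √n) := by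
          rw [div_mul_div_comm, Real.mul_self_sqrt hn₀.le, div_mul_cancel₀ _ (by positivity)]
          ring
      _ ≤ ε * √r := by
          gcongr
          rw [← Real.sqrt_div' c₁ hn₀.le]
          exact Real.sqrt_le_sqrt hr₁
  have hGP (i : ι) : |√r * a i * P i| ≤ P i := by
    rw [abs_mul, abs_mul, abs_of_nonneg (Real.sqrt_nonneg _), abs_of_pos (hP i)]
    exact mul_le_of_le_one_left (hP i).le
      ((mul_le_mul_of_nonneg_left (hA i) (Real.sqrt_nonneg _)).trans hrA)
  have hGsum : ∑ i, √r * a i * P i = 0 := by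
    simp only [mul_assoc, ← mul_sum, mul_comm (a _), ha, mul_zero]
  have hGr : ∑ i, (√r * a i * P i) ^ 2 / P i ≤ r := by
    calc ∑ i, (√r * a i * P i) ^ 2 / P i = r * ∑ i, P i * a i ^ 2 := by
          rw [mul_sum]
          refine sum_congr rfl fun i _ => ?_
          rw [mul_pow, mul_pow, Real.sq_sqrt hr.le]
          field_simp [(hP i).ne']
      _ ≤ r := mul_le_of_le_one_right hr.le ha2
  obtain ⟨T, hT, hTr, hTG⟩ := exists_isType_chiSq_le_of_slack P _ hP hPsum hGsum hGP hGr
    (div_nonneg hC₀ (Real.sqrt_nonneg _)) hε₁ (Nat.cast_pos.1 hn₀) hslack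
  refine ⟨T, hT, hTr, fun i => ?_⟩
  have hPi : P i ≤ 1 := hPsum ▸ single_le_sum (fun j _ => (hP j).le) (mem_univ i)
  calc n * |P i + √r * a i * P i - T i| ≤ n * (ε * |√r * a i * P i| + k / n) := by
        gcongr; exact hTG i
    _ = n * ε * √r * (|a i| * P i) + k := by
        rw [abs_mul, abs_mul, abs_of_nonneg (Real.sqrt_nonneg _), abs_of_pos (hP i), mul_add,
          mul_div_cancel₀ _ hn₀.ne']
        ring
    _ = C * √(n * r) * (|a i| * P i) + k := by
        rw [mul_div_left_comm, Real.div_sqrt, Real.sqrt_mul hn₀.le]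
        ring
    _ ≤ C * √c₂ * A + k := by
        gcongr
        · exact mul_nonneg (abs_nonneg _) (hP i).le
        · exact (mul_le_of_le_one_right (abs_nonneg _) hPi).trans (hA i)

theorem sum_mul_sub_div_eq_zero {P α : ι → ℝ} (hPsum : ∑ i, P i = 1) (s : ℝ) :
    ∑ i, P i * ((∑ j, P j * α j - α i) / s) = 0 := by
  calc ∑ i, P i * ((∑ j, P j * α j - α i) / s)
      = ((∑ j, P j * α j) * ∑ i, P i - ∑ i, P i * α i) / s := by
        rw [mul_sum, ← sum_sub_distrib, sum_div]
        exact sum_congr rfl fun i _ => by ring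
    _ = 0 := by rw [hPsum, mul_one, sub_self, zero_div]

theorem sum_mul_sub_div_sqrt_sq_le_one {P α : ι → ℝ} (hP : ∀ i, 0 ≤ P i) (D : ℝ) :
    ∑ i, P i * ((D - α i) / √(∑ j, P j * (α j - D) ^ 2)) ^ 2 ≤ 1 := by
  set V := ∑ j, P j * (α j - D) ^ 2
  have hV : 0 ≤ V := sum_nonneg fun i _ => mul_nonneg (hP i) (sq_nonneg _)
  calc ∑ i, P i * ((D - α i) / √V) ^ 2 = V / V := by
        rw [sum_div]
        exact sum_congr rfl fun i _ => by rw [div_pow, Real.sq_sqrt hV]; ring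
    _ ≤ 1 := div_self_le_one V

end

theorem rounding_lemma_for_types_general (k : ℕ)
    (P Q : Fin k → ℝ)
    (hPpos : ∀ i, 0 < P i) (hPsum : ∑ i, P i = 1)
    (D V : ℝ)
    (hD : D = ∑ i, P i * Real.log (P i / Q i))
    (hV : V = ∑ i, P i * (Real.log (P i / Q i) - D) ^ 2)
    (rbar : ℕ → ℝ)
    (c₁ c₂ : ℝ) (hc₁ : 0 < c₁) (N₀ : ℕ)
    (hrbar : ∀ n ≥ N₀, c₁ / n ≤ rbar n ∧ rbar n ≤ c₂ / n)
    (Γstar : ℕ → Fin k → ℝ)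
    (hΓstar : ∀ n i, Γstar n i =
      P i + Real.sqrt (rbar n) * (D - Real.log (P i / Q i)) * P i / Real.sqrt V) :
    ∃ κ > 0, ∃ N : ℕ, ∀ n ≥ N, ∃ T : Fin k → ℝ,
      (∀ i, ∃ m : ℕ, T i = (m : ℝ) / n) ∧
      (∑ i, T i = 1) ∧
      (∑ i, (T i - P i) ^ 2 / P i ≤ rbar n) ∧
      |(n : ℝ) * (∑ i, (Γstar n i - P i) * Real.log (P i / Q i))
        - (n : ℝ) * (∑ i, (T i - P i) * Real.log (P i / Q i))| ≤ κ := by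
  set a : Fin k → ℝ := fun i => (D - Real.log (P i / Q i)) / √V
  have ha : ∑ i, P i * a i = 0 := by
    simp only [a, hD]
    exact sum_mul_sub_div_eq_zero hPsum _
  have ha2 : ∑ i, P i * a i ^ 2 ≤ 1 := by
    simp only [a, hV]
    exact sum_mul_sub_div_sqrt_sq_le_one (fun i => (hPpos i).le) D
  obtain ⟨κ, hκ, N, hN⟩ := exists_isType_near_add_sqrt_mul P a hPpos hPsum ha ha2 hc₁ c₂
  refine ⟨κ * ∑ i, |Real.log (P i / Q i)| + 1, by positivity, max N N₀, fun n hn => ?_⟩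
  obtain ⟨hr₁, hr₂⟩ := hrbar n (le_of_max_le_right hn)
  obtain ⟨T, ⟨hTm, hTsum⟩, hTr, hT⟩ := hN n (le_of_max_le_left hn) (rbar n) hr₁ hr₂
  refine ⟨T, hTm, hTsum, hTr, ?_⟩
  have hΓ (i : Fin k) : Γstar n i = P i + √(rbar n) * a i * P i := by
    rw [hΓstar]; simp only [a]; ring
  calc |(n : ℝ) * ∑ i, (Γstar n i - P i) * Real.log (P i / Q i)
          - n * ∑ i, (T i - P i) * Real.log (P i / Q i)|
      = |∑ i, n * (P i + √(rbar n) * a i * P i - T i) * Real.log (P i / Q i)| := by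
        rw [← mul_sub, ← sum_sub_distrib, mul_sum]
        simp only [hΓ]
        congr 1
        exact sum_congr rfl fun i _ => by ring
    _ ≤ ∑ i, κ * |Real.log (P i / Q i)| := by
        refine (abs_sum_le_sum_abs _ _).trans (sum_le_sum fun i _ => ?_)
        rw [abs_mul, abs_mul, Nat.abs_cast]
        exact mul_le_mul_of_nonneg_right (hT i) (abs_nonneg _)
    _ ≤ κ * ∑ i, |Real.log (P i / Q i)| + 1 := by rw [← mul_sum]; linarith

/-- Rounding lemma: near the minimizer `Γ*(n)` there is a type `T*_n` with denominator `n`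
inside the chi-squared ball whose linear functional value differs by at most a constant. -/
theorem rounding_lemma_for_types (k : ℕ) (hk : 2 ≤ k)
    (P Q : Fin k → ℝ)
    (hPpos : ∀ i, 0 < P i) (hPsum : ∑ i, P i = 1)
    (hQpos : ∀ i, 0 < Q i) (hQsum : ∑ i, Q i = 1)
    (hPQ : P ≠ Q)
    (D V τ : ℝ)
    (hD : D = ∑ i, P i * Real.log (P i / Q i))
    (hV : V = ∑ i, P i * (Real.log (P i / Q i) - D) ^ 2)
    (hτmem : ∃ j, Real.log (P j / Q j) - D = τ ∧ 0 < Real.log (P j / Q j) - D)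
    (hτmax : ∀ j, 0 < Real.log (P j / Q j) - D → Real.log (P j / Q j) - D ≤ τ)
    (rbar : ℕ → ℝ)
    (c₁ c₂ : ℝ) (hc₁ : 0 < c₁) (hc₂ : 0 < c₂) (N₀ : ℕ)
    (hrbar : ∀ n ≥ N₀, c₁ / n ≤ rbar n ∧ rbar n ≤ c₂ / n)
    (hrpos : ∀ n, 0 < rbar n)
    (hrτ : ∀ n, Real.sqrt (rbar n) < Real.sqrt V / τ)
    (Γstar : ℕ → Fin k → ℝ)
    (hΓstar : ∀ n i, Γstar n i =
      P i + Real.sqrt (rbar n) * (D - Real.log (P i / Q i)) * P i / Real.sqrt V) :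
    ∃ κ > 0, ∃ N : ℕ, ∀ n ≥ N, ∃ T : Fin k → ℝ,
      (∀ i, ∃ m : ℕ, T i = (m : ℝ) / n) ∧
      (∑ i, T i = 1) ∧
      (∑ i, (T i - P i) ^ 2 / P i ≤ rbar n) ∧
      |(n : ℝ) * (∑ i, (Γstar n i - P i) * Real.log (P i / Q i))
        - (n : ℝ) * (∑ i, (T i - P i) * Real.log (P i / Q i))| ≤ κ :=
  rounding_lemma_for_types_general k P Q hPpos hPsum D V hD hV rbar c₁ c₂ hc₁ N₀ hrbar Γstar hΓstar
end
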